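/- arXiv:2409.07213 — 8 statements merged into one kernel-verified Lean document; each statement's English description precedes it below -/
import Mathlib

section
/- If J is a face of the cone of n×n positive semidefinite real symmetric matrices, then the convex hull of the set of rank-one matrices contained in J equals J itself. -/
open Matrix

/-- The cone of n×n real positive semidefinite symmetric matrices. -/
def PSDcone (n : ℕ) : Set (Matrix (Fin n) (Fin n) ℝ) := {X | X.PosSemidef}

/-- Γ^n = {x xᵀ : x ∈ ℝ^n}, the rank-one PSD matrices (together with 0). -/
def Gamma (n : ℕ) : Set (Matrix (Fin n) (Fin n) ℝ) :=
  {X | ∃ x : Fin n → ℝ, X = vecMulVec x x}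

/-- F is a face of the convex cone K: F is a convex subcone of K such that
whenever X, Y ∈ K and X + Y ∈ F, then X, Y ∈ F. -/
def IsFaceOf {n : ℕ} (K F : Set (Matrix (Fin n) (Fin n) ℝ)) : Prop :=
  F ⊆ K ∧ Convex ℝ F ∧ (∀ X ∈ F, ∀ c : ℝ, 0 ≤ c → c • X ∈ F) ∧
    ∀ X ∈ K, ∀ Y ∈ K, X + Y ∈ F → X ∈ F ∧ Y ∈ F

/-!
Every `X ∈ J` is positive semidefinite, hence a finite sum of rank-one matrices `v vᵀ`. Each of
them is again positive semidefinite, so the face property puts every summand in `J ∩ Γⁿ`. Since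
`J ∩ Γⁿ` is a cone, a sum of `m` of its elements is the average of these elements scaled by `m`,
hence lies in the convex hull.
-/

theorem Finset.sum_mem_convexHull_of_smul_mem {𝕜 E ι : Type*} [Field 𝕜] [LinearOrder 𝕜]
    [IsStrictOrderedRing 𝕜] [AddCommGroup E] [Module 𝕜 E] {s : Set E}
    (hs : ∀ x ∈ s, ∀ c : 𝕜, 0 ≤ c → c • x ∈ s) (h0 : (0 : E) ∈ s)
    (t : Finset ι) {z : ι → E} (hz : ∀ i ∈ t, z i ∈ s) :
    ∑ i ∈ t, z i ∈ convexHull 𝕜 s := by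
  rcases t.eq_empty_or_nonempty with rfl | ht
  · simpa using subset_convexHull 𝕜 s h0
  have hcard : (t.card : 𝕜) ≠ 0 := Nat.cast_ne_zero.mpr ht.card_ne_zero
  have hmem := (convex_convexHull 𝕜 s).sum_mem (t := t) (w := fun _ ↦ (t.card : 𝕜)⁻¹)
    (z := fun i ↦ (t.card : 𝕜) • z i) (fun _ _ ↦ by positivity)
    (by simp [Finset.sum_const, nsmul_eq_mul, hcard])
    (fun i hi ↦ subset_convexHull 𝕜 s (hs _ (hz i hi) _ (Nat.cast_nonneg _)))
  simpa only [smul_smul, inv_mul_cancel₀ hcard, one_smul] using hmem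

theorem IsFaceOf.mem_of_sum_mem {n : ℕ} {K F : Set (Matrix (Fin n) (Fin n) ℝ)}
    (hF : IsFaceOf K F) (hK_zero : 0 ∈ K) (hK_add : ∀ X ∈ K, ∀ Y ∈ K, X + Y ∈ K)
    {ι : Type*} {t : Finset ι} {M : ι → Matrix (Fin n) (Fin n) ℝ} (hM : ∀ i ∈ t, M i ∈ K)
    (hsum : ∑ i ∈ t, M i ∈ F) {i : ι} (hi : i ∈ t) : M i ∈ F := by
  classical
  have hrest : ∑ j ∈ t.erase i, M j ∈ K :=
    Finset.sum_induction _ (· ∈ K) (fun X Y hX hY ↦ hK_add X hX Y hY) hK_zero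
      fun j hj ↦ hM j (Finset.mem_of_mem_erase hj)
  rw [← Finset.add_sum_erase t M hi] at hsum
  exact (hF.2.2.2 _ (hM i hi) _ hrest hsum).1

theorem vecMulVec_self_mem_PSDcone {n : ℕ} (x : Fin n → ℝ) : vecMulVec x x ∈ PSDcone n := by
  show (vecMulVec x x).PosSemidef
  simpa using posSemidef_vecMulVec_self_star x

theorem smul_mem_Gamma {n : ℕ} {X : Matrix (Fin n) (Fin n) ℝ} (hX : X ∈ Gamma n) {c : ℝ}
    (hc : 0 ≤ c) : c • X ∈ Gamma n := by
  obtain ⟨x, rfl⟩ := hX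
  refine ⟨√c • x, ?_⟩
  rw [smul_vecMulVec, vecMulVec_smul, smul_smul, Real.mul_self_sqrt hc]

theorem stmt0 {n : ℕ} (J : Set (Matrix (Fin n) (Fin n) ℝ))
    (hJ : IsFaceOf (PSDcone n) J) :
    convexHull ℝ (J ∩ Gamma n) = J := by
  refine (convexHull_min Set.inter_subset_left hJ.2.1).antisymm fun X hX ↦ ?_
  obtain ⟨m, v, rfl⟩ := posSemidef_iff_eq_sum_vecMulVec.mp (hJ.1 hX)
  simp only [star_trivial] at hX ⊢
  have hcone : ∀ Y ∈ J ∩ Gamma n, ∀ c : ℝ, 0 ≤ c → c • Y ∈ J ∩ Gamma n :=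
    fun Y hY c hc ↦ ⟨hJ.2.2.1 Y hY.1 c hc, smul_mem_Gamma hY.2 hc⟩
  have hzero : (0 : Matrix (Fin n) (Fin n) ℝ) ∈ J ∩ Gamma n :=
    ⟨by simpa using hJ.2.2.1 _ hX 0 le_rfl, 0, by simp⟩
  refine Finset.sum_mem_convexHull_of_smul_mem hcone hzero _ fun i hi ↦ ⟨?_, v i, rfl⟩
  exact hJ.mem_of_sum_mem PosSemidef.zero (fun _ hX _ hY ↦ PosSemidef.add hX hY)
    (fun j _ ↦ vecMulVec_self_mem_PSDcone (v j)) hX hi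
end

section
/- If J is a closed convex cone contained in S^n_+ with co(J ∩ Γ^n) = J, and J' is a face of J, then co(J' ∩ Γ^n) = J'. -/
open Matrix

lemma sum_mem_cone {n : ℕ} {J : Set (Matrix (Fin n) (Fin n) ℝ)}
    (hJadd : ∀ X ∈ J, ∀ Y ∈ J, X + Y ∈ J) (h0 : (0 : Matrix (Fin n) (Fin n) ℝ) ∈ J)
    {ι : Type*} (t : Finset ι) (Y : ι → Matrix (Fin n) (Fin n) ℝ)
    (hY : ∀ i ∈ t, Y i ∈ J) : ∑ i ∈ t, Y i ∈ J := by
  induction t using Finset.cons_induction with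
  | empty => simpa
  | cons a s ha ih =>
    rw [Finset.sum_cons]
    exact hJadd _ (hY a (by simp)) _ (ih fun i hi => hY i (Finset.mem_cons_of_mem hi))

lemma face_sum {n : ℕ} {J J' : Set (Matrix (Fin n) (Fin n) ℝ)}
    (hJ' : IsFaceOf J J')
    (hJadd : ∀ X ∈ J, ∀ Y ∈ J, X + Y ∈ J) (h0 : (0 : Matrix (Fin n) (Fin n) ℝ) ∈ J)
    {ι : Type*} (t : Finset ι) (Y : ι → Matrix (Fin n) (Fin n) ℝ)
    (hY : ∀ i ∈ t, Y i ∈ J) (hsum : ∑ i ∈ t, Y i ∈ J') :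
    ∀ i ∈ t, Y i ∈ J' := by
  induction t using Finset.cons_induction with
  | empty => simp
  | cons a s ha ih =>
    rw [Finset.sum_cons] at hsum
    have hsJ : ∑ i ∈ s, Y i ∈ J :=
      sum_mem_cone hJadd h0 s Y (fun i hi => hY i (Finset.mem_cons_of_mem hi))
    have h2 := hJ'.2.2.2 _ (hY a (by simp)) _ hsJ hsum
    intro i hi
    rcases Finset.mem_cons.mp hi with rfl | hi
    · exact h2.1
    · exact ih (fun j hj => hY j (Finset.mem_cons_of_mem hj)) h2.2 i hi

theorem stmt1 {n : ℕ} (J J' : Set (Matrix (Fin n) (Fin n) ℝ))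
    (hJclosed : IsClosed J) (hJconv : Convex ℝ J)
    (hJcone : ∀ X ∈ J, ∀ c : ℝ, 0 ≤ c → c • X ∈ J)
    (hJsub : J ⊆ PSDcone n)
    (hJhull : convexHull ℝ (J ∩ Gamma n) = J)
    (hJ' : IsFaceOf J J') :
    convexHull ℝ (J' ∩ Gamma n) = J' := by
  obtain ⟨hsub, hconv, hcone, hface⟩ := hJ'
  apply Set.Subset.antisymm
  · exact convexHull_min Set.inter_subset_left hconv
  · intro X hX
    have hXJ : X ∈ J := hsub hX
    have h0 : (0 : Matrix (Fin n) (Fin n) ℝ) ∈ J := by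
      simpa using hJcone X hXJ 0 le_rfl
    have h0' : (0 : Matrix (Fin n) (Fin n) ℝ) ∈ J' := by
      simpa using hcone X hX 0 le_rfl
    have hJadd : ∀ A ∈ J, ∀ B ∈ J, A + B ∈ J := by
      intro A hA B hB
      have h := hJconv hA hB (by norm_num : (0:ℝ) ≤ 1/2) (by norm_num : (0:ℝ) ≤ 1/2)
        (by norm_num)
      have h2 := hJcone _ h 2 (by norm_num)
      convert h2 using 1
      rw [smul_add, smul_smul, smul_smul]
      norm_num
    have hXhull : X ∈ convexHull ℝ (J ∩ Gamma n) := by rw [hJhull]; exact hXJ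
    rw [convexHull_eq] at hXhull
    obtain ⟨ι, t, w, z, hw0, hw1, hz, hcm⟩ := hXhull
    have hXeq : X = ∑ i ∈ t, w i • z i := by
      rw [← hcm, Finset.centerMass_eq_of_sum_1 _ _ hw1]
    have hterms : ∀ i ∈ t, w i • z i ∈ J := fun i hi =>
      hJcone _ (hz i hi).1 _ (hw0 i hi)
    have hsum' : ∑ i ∈ t, w i • z i ∈ J' := by rw [← hXeq]; exact hX
    have htermsJ' : ∀ i ∈ t, w i • z i ∈ J' :=
      face_sum ⟨hsub, hconv, hcone, hface⟩ hJadd h0 t _ hterms hsum'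
    set z' : ι → Matrix (Fin n) (Fin n) ℝ := fun i => if 0 < w i then z i else 0 with hz'
    have hz'mem : ∀ i ∈ t, z' i ∈ J' ∩ Gamma n := by
      intro i hi
      simp only [hz']
      split_ifs with hpos
      · refine ⟨?_, (hz i hi).2⟩
        have := hcone _ (htermsJ' i hi) (w i)⁻¹ (le_of_lt (by positivity))
        rwa [smul_smul, inv_mul_cancel₀ (ne_of_gt hpos), one_smul] at this
      · exact ⟨h0', ⟨0, by simp [vecMulVec]; ext i j; simp⟩⟩
    have hXeq' : X = ∑ i ∈ t, w i • z' i := by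
      rw [hXeq]
      apply Finset.sum_congr rfl
      intro i hi
      simp only [hz']
      split_ifs with hpos
      · rfl
      · have : w i = 0 := le_antisymm (not_lt.mp hpos) (hw0 i hi)
        simp [this]
    rw [convexHull_eq]
    exact ⟨ι, t, w, z', hw0, hw1, hz'mem, by
      rw [Finset.centerMass_eq_of_sum_1 _ _ hw1, ← hXeq']⟩
end

section
/- Let B ⊆ S^n be a bounded set of symmetric matrices such that for every distinct pair A, B ∈ B, the set J_0(B) = {X ∈ S^n_+ : ⟨B,X⟩ = 0} is contained in J_+(A) = {X ∈ S^n_+ : ⟨A,X⟩ ≥ 0}. Then co(Γ^n ∩ J_+(B)) = J_+(B), where J_+(B) = {X ∈ S^n_+ : ⟨B,X⟩ ≥ 0 for all B ∈ B}. -/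
open Matrix

/-- J_+(B) = {X ∈ S^n_+ : ⟨B,X⟩ ≥ 0}. -/
def Jp {n : ℕ} (B : Matrix (Fin n) (Fin n) ℝ) : Set (Matrix (Fin n) (Fin n) ℝ) :=
  {X | X.PosSemidef ∧ 0 ≤ (B * X).trace}

/-- J_0(B) = {X ∈ S^n_+ : ⟨B,X⟩ = 0}. -/
def J0 {n : ℕ} (B : Matrix (Fin n) (Fin n) ℝ) : Set (Matrix (Fin n) (Fin n) ℝ) :=
  {X | X.PosSemidef ∧ (B * X).trace = 0}

/-- J_+(𝓑) = {X ∈ S^n_+ : ⟨B,X⟩ ≥ 0 for all B ∈ 𝓑}. -/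
def JpFam {n : ℕ} (𝓑 : Set (Matrix (Fin n) (Fin n) ℝ)) : Set (Matrix (Fin n) (Fin n) ℝ) :=
  {X | X.PosSemidef ∧ ∀ B ∈ 𝓑, 0 ≤ (B * X).trace}

/-!
Every positive semidefinite `X` is a sum of rank-one matrices `v vᵀ`. If `⟨B, X⟩ = 0`, rotating two
terms of opposite sign in their plane (intermediate value theorem) makes one of them orthogonal to
`B`; repeating this writes `X` as a sum of points of `Γⁿ ∩ J₀(B)`, and condition (B) puts those in
`J₊(𝓑)`. For general `X ∈ J₊(𝓑)`, split off a term `W = w wᵀ ∉ J₊(𝓑)`, `X = Y + W`. The ray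
`X + tW`, `t ≥ 0`, stays positive semidefinite and leaves `J₊(𝓑)` through some face `J₀(B)`; going
back towards `Y` we either reach `Y`, which is handled by induction on the number of terms, or
another face `J₀(B')` first. Then `X` is a convex combination of two points already in the hull.
-/

open Set
open scoped Pointwise

section ConvexHull

variable {E : Type*} [AddCommGroup E] [Module ℝ E] {S : Set E}

theorem add_mem_convexHull_of_smul_mem (hS : ∀ c : ℝ, 0 ≤ c → ∀ x ∈ S, c • x ∈ S) {x y : E}
    (hx : x ∈ convexHull ℝ S) (hy : y ∈ convexHull ℝ S) : x + y ∈ convexHull ℝ S := by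
  have hmid : (2⁻¹ : ℝ) • x + (2⁻¹ : ℝ) • y ∈ convexHull ℝ S :=
    convex_convexHull ℝ S hx hy (by norm_num) (by norm_num) (by norm_num)
  have h2S : (2 : ℝ) • S ⊆ S := by
    rintro _ ⟨z, hz, rfl⟩
    exact hS 2 zero_le_two z hz
  have : x + y = (2 : ℝ) • ((2⁻¹ : ℝ) • x + (2⁻¹ : ℝ) • y) := by module
  rw [this]
  exact convexHull_mono h2S (convexHull_smul (2 : ℝ) S ▸ smul_mem_smul_set hmid)

theorem AddSubmonoid.closure_subset_convexHull (h0 : 0 ∈ S)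
    (hS : ∀ c : ℝ, 0 ≤ c → ∀ x ∈ S, c • x ∈ S) :
    (AddSubmonoid.closure S : Set E) ⊆ convexHull ℝ S := fun _ hx =>
  AddSubmonoid.closure_induction (fun _ hx => subset_convexHull ℝ S hx)
    (subset_convexHull ℝ S h0) (fun _ _ _ _ hx hy => add_mem_convexHull_of_smul_mem hS hx hy) hx

theorem Convex.mem_of_add_smul_mem {C : Set E} (hC : Convex ℝ C) {x w : E} {a b : ℝ}
    (ha : a ≤ 0) (hb : 0 ≤ b) (hxa : x + a • w ∈ C) (hxb : x + b • w ∈ C) : x ∈ C := by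
  rcases hb.eq_or_lt with rfl | hb
  · simpa using hxb
  have hba : 0 < b - a := by linarith
  convert hC hxa hxb (div_nonneg hb.le hba.le) (div_nonneg (neg_nonneg.mpr ha) hba.le)
    (by field_simp; ring) using 1
  match_scalars <;> field_simp <;> ring

end ConvexHull

variable {n : ℕ}

theorem vecMulVec_self_posSemidef (x : Fin n → ℝ) : (vecMulVec x x).PosSemidef :=
  posSemidef_vecMulVec_self_star x

theorem smul_vecMulVec_self {c : ℝ} (hc : 0 ≤ c) (x : Fin n → ℝ) :
    c • vecMulVec x x = vecMulVec (√c • x) (√c • x) := by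
  rw [smul_vecMulVec, vecMulVec_smul, smul_smul, Real.mul_self_sqrt hc]

theorem Matrix.PosSemidef.exists_multiset_sum_vecMulVec {X : Matrix (Fin n) (Fin n) ℝ}
    (hX : X.PosSemidef) : ∃ l : Multiset (Fin n → ℝ), (l.map fun v => vecMulVec v v).sum = X := by
  obtain ⟨m, v, rfl⟩ := posSemidef_iff_eq_sum_vecMulVec.mp hX
  exact ⟨Finset.univ.val.map v, by simp [Finset.sum_eq_multiset_sum, Function.comp_def]⟩

theorem posSemidef_sum_vecMulVec (l : Multiset (Fin n → ℝ)) :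
    (l.map fun v => vecMulVec v v).sum.PosSemidef :=
  Multiset.sum_induction _ _ (fun _ _ => PosSemidef.add) PosSemidef.zero
    (Multiset.forall_mem_map_iff.mpr fun v _ => vecMulVec_self_posSemidef v)

theorem trace_mul_add_smul_eq_zero (B X W : Matrix (Fin n) (Fin n) ℝ) (hW : (B * W).trace ≠ 0) :
    (B * (X + (-(B * X).trace / (B * W).trace) • W)).trace = 0 := by
  rw [Matrix.mul_add, trace_add, Matrix.mul_smul, trace_smul, smul_eq_mul]
  field_simp
  ring

theorem convex_JpFam (𝓑 : Set (Matrix (Fin n) (Fin n) ℝ)) : Convex ℝ (JpFam 𝓑) := by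
  intro X hX Y hY a b ha hb _
  refine ⟨(hX.1.smul ha).add (hY.1.smul hb), fun B hB => ?_⟩
  rw [Matrix.mul_add, trace_add, Matrix.mul_smul, Matrix.mul_smul, trace_smul, trace_smul]
  exact add_nonneg (smul_nonneg ha (hX.2 B hB)) (smul_nonneg hb (hY.2 B hB))

open Real in
theorem vecMulVec_rotate (a b : Fin n → ℝ) (θ : ℝ) :
    vecMulVec (cos θ • a + sin θ • b) (cos θ • a + sin θ • b) +
      vecMulVec (sin θ • a - cos θ • b) (sin θ • a - cos θ • b) =
      vecMulVec a a + vecMulVec b b := by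
  ext i j
  simp only [vecMulVec_apply, Matrix.add_apply, Pi.add_apply, Pi.sub_apply, Pi.smul_apply,
    smul_eq_mul]
  linear_combination (a i * a j + b i * b j) * sin_sq_add_cos_sq θ

open Real in
theorem exists_vecMulVec_add_eq_of_mul_nonpos (B : Matrix (Fin n) (Fin n) ℝ) {a b : Fin n → ℝ}
    (hab : (B * vecMulVec a a).trace * (B * vecMulVec b b).trace ≤ 0) :
    ∃ y z : Fin n → ℝ, vecMulVec y y + vecMulVec z z = vecMulVec a a + vecMulVec b b ∧
      (B * vecMulVec y y).trace = 0 := by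
  set f : ℝ → ℝ := fun θ => (B * vecMulVec (cos θ • a + sin θ • b) (cos θ • a + sin θ • b)).trace
  have hf : Continuous f := by fun_prop
  have h0 : (0 : ℝ) ∈ uIcc (f 0) (f (π / 2)) := by
    simp only [f, cos_zero, sin_zero, cos_pi_div_two, sin_pi_div_two, one_smul, zero_smul,
      add_zero, zero_add, mem_uIcc]
    rcases mul_nonpos_iff.mp hab with h | h
    · exact Or.inr ⟨h.2, h.1⟩
    · exact Or.inl ⟨h.1, h.2⟩
  obtain ⟨θ, -, hθ⟩ := intermediate_value_uIcc hf.continuousOn h0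
  exact ⟨_, _, vecMulVec_rotate a b θ, hθ⟩

theorem multiset_sum_vecMulVec_mem_closure_J0 (B : Matrix (Fin n) (Fin n) ℝ)
    (l : Multiset (Fin n → ℝ)) (hl : (l.map fun v => (B * vecMulVec v v).trace).sum = 0) :
    (l.map fun v => vecMulVec v v).sum ∈ AddSubmonoid.closure (Gamma n ∩ J0 B) := by
  set q : (Fin n → ℝ) → ℝ := fun v => (B * vecMulVec v v).trace with hq
  have mem_of_q_eq_zero {v : Fin n → ℝ} (hv : q v = 0) :
      vecMulVec v v ∈ AddSubmonoid.closure (Gamma n ∩ J0 B) :=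
    AddSubmonoid.subset_closure ⟨⟨v, rfl⟩, vecMulVec_self_posSemidef v, hv⟩
  by_cases hzero : ∀ v ∈ l, q v = 0
  · exact AddSubmonoid.multiset_sum_mem _ _
      (Multiset.forall_mem_map_iff.mpr fun v hv => mem_of_q_eq_zero (hzero v hv))
  push Not at hzero
  obtain ⟨a, ha, hqa⟩ := hzero
  obtain ⟨l₁, rfl⟩ := Multiset.exists_cons_of_mem ha
  obtain ⟨b, hb, hqab⟩ : ∃ b ∈ l₁, q a * q b < 0 := by
    by_contra! h
    have hnonneg : 0 ≤ q a * (l₁.map q).sum := by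
      rw [← Multiset.sum_map_mul_left]
      exact Multiset.sum_nonneg (by simpa using h)
    rw [Multiset.map_cons, Multiset.sum_cons] at hl
    have hsum : (l₁.map q).sum = -q a := by linarith
    rw [hsum] at hnonneg
    nlinarith [mul_self_pos.mpr hqa]
  obtain ⟨l₂, rfl⟩ := Multiset.exists_cons_of_mem hb
  obtain ⟨y, z, hyz, hy⟩ := exists_vecMulVec_add_eq_of_mul_nonpos B hqab.le
  have hqyz : q y + q z = q a + q b := by
    simp only [hq, ← trace_add, ← Matrix.mul_add, hyz]
  have hrest := multiset_sum_vecMulVec_mem_closure_J0 B (z ::ₘ l₂) (by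
    simp only [Multiset.map_cons, Multiset.sum_cons] at hl ⊢
    linarith)
  have hsum : ((a ::ₘ b ::ₘ l₂).map fun v => vecMulVec v v).sum =
      vecMulVec y y + ((z ::ₘ l₂).map fun v => vecMulVec v v).sum := by
    simp only [Multiset.map_cons, Multiset.sum_cons, ← add_assoc, hyz]
  rw [hsum]
  exact add_mem (mem_of_q_eq_zero hy) hrest
termination_by Multiset.card l
decreasing_by simp_all

theorem J0_subset_closure_Gamma_inter_J0 (B : Matrix (Fin n) (Fin n) ℝ) :
    J0 B ⊆ AddSubmonoid.closure (Gamma n ∩ J0 B) := by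
  rintro X ⟨hX, hBX⟩
  obtain ⟨l, rfl⟩ := hX.exists_multiset_sum_vecMulVec
  refine multiset_sum_vecMulVec_mem_closure_J0 B l ?_
  rw [← hBX, ← Multiset.sum_map_mul_left, trace_multiset_sum, Multiset.map_map]
  rfl

section Hull

variable {𝓑 : Set (Matrix (Fin n) (Fin n) ℝ)}

theorem smul_mem_Gamma_inter_JpFam {c : ℝ} (hc : 0 ≤ c) {X : Matrix (Fin n) (Fin n) ℝ}
    (hX : X ∈ Gamma n ∩ JpFam 𝓑) : c • X ∈ Gamma n ∩ JpFam 𝓑 := by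
  obtain ⟨⟨x, rfl⟩, hpsd, hB⟩ := hX
  refine ⟨⟨√c • x, smul_vecMulVec_self hc x⟩, hpsd.smul hc, fun B hB' => ?_⟩
  rw [Matrix.mul_smul, trace_smul]
  exact smul_nonneg hc (hB B hB')

theorem closure_Gamma_inter_JpFam_subset_convexHull :
    (AddSubmonoid.closure (Gamma n ∩ JpFam 𝓑) : Set _) ⊆ convexHull ℝ (Gamma n ∩ JpFam 𝓑) :=
  AddSubmonoid.closure_subset_convexHull
    ⟨⟨0, by simp⟩, PosSemidef.zero, fun B _ => by simp⟩
    fun _ hc _ hX => smul_mem_Gamma_inter_JpFam hc hX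

variable (hcondB : ∀ A ∈ 𝓑, ∀ B ∈ 𝓑, A ≠ B → J0 B ⊆ Jp A)
include hcondB

theorem Gamma_inter_J0_subset_JpFam {B : Matrix (Fin n) (Fin n) ℝ} (hB : B ∈ 𝓑) :
    Gamma n ∩ J0 B ⊆ Gamma n ∩ JpFam 𝓑 := by
  rintro X ⟨hXΓ, hX⟩
  refine ⟨hXΓ, hX.1, fun A hA => ?_⟩
  rcases eq_or_ne A B with rfl | hAB
  · exact hX.2.ge
  · exact (hcondB A hA B hB hAB hX).2

theorem J0_subset_convexHull {B : Matrix (Fin n) (Fin n) ℝ} (hB : B ∈ 𝓑) :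
    J0 B ⊆ convexHull ℝ (Gamma n ∩ JpFam 𝓑) := fun _ hX =>
  closure_Gamma_inter_JpFam_subset_convexHull <|
    AddSubmonoid.closure_mono (Gamma_inter_J0_subset_JpFam hcondB hB)
      (J0_subset_closure_Gamma_inter_J0 B hX)

theorem add_mem_convexHull_of_notMem_JpFam {Y W : Matrix (Fin n) (Fin n) ℝ}
    (hYW : Y + W ∈ JpFam 𝓑) (hY : Y.PosSemidef) (hW : W.PosSemidef) (hWB : W ∉ JpFam 𝓑)
    (ih : Y ∈ JpFam 𝓑 → Y ∈ convexHull ℝ (Gamma n ∩ JpFam 𝓑)) :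
    Y + W ∈ convexHull ℝ (Gamma n ∩ JpFam 𝓑) := by
  by_cases htight : ∃ B ∈ 𝓑, (B * (Y + W)).trace = 0
  · obtain ⟨B, hB, hBYW⟩ := htight
    exact J0_subset_convexHull hcondB hB ⟨hYW.1, hBYW⟩
  push Not at htight
  have hpos : ∀ B ∈ 𝓑, 0 < (B * (Y + W)).trace := fun B hB =>
    (hYW.2 B hB).lt_of_ne' (htight B hB)
  obtain ⟨B₀, hB₀, hB₀W⟩ : ∃ B ∈ 𝓑, (B * W).trace < 0 := by
    simpa [JpFam, hW] using hWB
  set t := -(B₀ * (Y + W)).trace / (B₀ * W).trace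
  have ht : 0 ≤ t := div_nonneg_of_nonpos (neg_nonpos.mpr (hpos B₀ hB₀).le) hB₀W.le
  have hforward : Y + W + t • W ∈ convexHull ℝ (Gamma n ∩ JpFam 𝓑) :=
    J0_subset_convexHull hcondB hB₀
      ⟨(hY.add hW).add (hW.smul ht), trace_mul_add_smul_eq_zero _ _ _ hB₀W.ne⟩
  obtain ⟨s, hs, hbackward⟩ :
      ∃ s ≤ (0 : ℝ), Y + W + s • W ∈ convexHull ℝ (Gamma n ∩ JpFam 𝓑) := by
    by_cases hYB : Y ∈ JpFam 𝓑
    · exact ⟨-1, by norm_num, by simpa using ih hYB⟩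
    obtain ⟨B₁, hB₁, hB₁Y⟩ : ∃ B ∈ 𝓑, (B * Y).trace < 0 := by
      simpa [JpFam, hY] using hYB
    have hB₁YW : (B₁ * (Y + W)).trace = (B₁ * Y).trace + (B₁ * W).trace := by
      rw [Matrix.mul_add, trace_add]
    have hB₁W : (B₁ * (Y + W)).trace < (B₁ * W).trace := by linarith
    have hα := hpos B₁ hB₁
    set s := -(B₁ * (Y + W)).trace / (B₁ * W).trace
    have hs : -1 ≤ s ∧ s ≤ 0 := by
      constructor
      · rw [le_div_iff₀ (hα.trans hB₁W)]; linarith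
      · exact div_nonpos_of_nonpos_of_nonneg (by linarith) (by linarith)
    refine ⟨s, hs.2, J0_subset_convexHull hcondB hB₁ ⟨?_, trace_mul_add_smul_eq_zero _ _ _ ?_⟩⟩
    · rw [show Y + W + s • W = Y + (1 + s) • W by module]
      exact hY.add (hW.smul (by linarith))
    · linarith
  exact (convex_convexHull ℝ _).mem_of_add_smul_mem hs ht hbackward hforward

theorem multiset_sum_vecMulVec_mem_convexHull (l : Multiset (Fin n → ℝ))
    (hl : (l.map fun v => vecMulVec v v).sum ∈ JpFam 𝓑) :
    (l.map fun v => vecMulVec v v).sum ∈ convexHull ℝ (Gamma n ∩ JpFam 𝓑) := by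
  by_cases hfeas : ∀ v ∈ l, vecMulVec v v ∈ JpFam 𝓑
  · refine closure_Gamma_inter_JpFam_subset_convexHull <| AddSubmonoid.multiset_sum_mem _ _ ?_
    exact Multiset.forall_mem_map_iff.mpr fun v hv =>
      AddSubmonoid.subset_closure ⟨⟨v, rfl⟩, hfeas v hv⟩
  push Not at hfeas
  obtain ⟨w, hw, hwB⟩ := hfeas
  obtain ⟨l', rfl⟩ := Multiset.exists_cons_of_mem hw
  rw [Multiset.map_cons, Multiset.sum_cons, add_comm] at hl ⊢
  exact add_mem_convexHull_of_notMem_JpFam hcondB hl (posSemidef_sum_vecMulVec l')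
    (vecMulVec_self_posSemidef w) hwB (multiset_sum_vecMulVec_mem_convexHull l')
termination_by Multiset.card l
decreasing_by simp_all

end Hull

theorem stmt3_general {n : ℕ} (𝓑 : Set (Matrix (Fin n) (Fin n) ℝ))
    (hcondB : ∀ A ∈ 𝓑, ∀ B ∈ 𝓑, A ≠ B → J0 B ⊆ Jp A) :
    convexHull ℝ (Gamma n ∩ JpFam 𝓑) = JpFam 𝓑 := by
  refine (convexHull_min inter_subset_right (convex_JpFam 𝓑)).antisymm fun X hX => ?_
  obtain ⟨l, rfl⟩ := hX.1.exists_multiset_sum_vecMulVec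
  exact multiset_sum_vecMulVec_mem_convexHull hcondB l hX

theorem stmt3 {n : ℕ} (𝓑 : Set (Matrix (Fin n) (Fin n) ℝ))
    (hsymm : ∀ B ∈ 𝓑, B.IsSymm)
    (hbdd : ∃ r : ℝ, ∀ B ∈ 𝓑, ∀ i j, |B i j| ≤ r)
    (hcondB : ∀ A ∈ 𝓑, ∀ B ∈ 𝓑, A ≠ B → J0 B ⊆ Jp A) :
    convexHull ℝ (Gamma n ∩ JpFam 𝓑) = JpFam 𝓑 :=
  stmt3_general 𝓑 hcondB
end

section
/- For any single symmetric matrix B ∈ S^n, each of the sets J_+(B) = {X ∈ S^n_+ : ⟨B,X⟩ ≥ 0}, J_-(B) = {X ∈ S^n_+ : ⟨B,X⟩ ≤ 0}, and J_0(B) = {X ∈ S^n_+ : ⟨B,X⟩ = 0} equals the convex hull of its intersection with the rank-one matrices Γ^n. -/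
open Matrix

/-- J_-(B) = {X ∈ S^n_+ : ⟨B,X⟩ ≤ 0}. -/
def Jm {n : ℕ} (B : Matrix (Fin n) (Fin n) ℝ) : Set (Matrix (Fin n) (Fin n) ℝ) :=
  {X | X.PosSemidef ∧ (B * X).trace ≤ 0}

/-!
Write `X ⪰ 0` as `∑ xᵢ xᵢᵀ` and let `q x = ⟨B, x xᵀ⟩`. Rotating a pair `(v, w)` by an angle `θ`
does not change `v vᵀ + w wᵀ`; if `q v` and `q w` have opposite signs, the intermediate value
theorem gives an angle at which `q` vanishes on the first rotated vector. Repeating this, one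
reaches a decomposition on which `q` has constant sign, so each term `xᵢ xᵢᵀ` satisfies the
same sign constraint as `X`. Since the sets `J_±(B)`, `J_0(B)` are cones, `X` is then a convex
combination of rescaled terms.

Only the linearity of `X ↦ ⟨B, X⟩` is used, so the argument is run for a linear functional `φ`
and a set `T` of admissible values standing for `[0, ∞)`, `(-∞, 0]` or `{0}`.
-/

open Set Real Pointwise

theorem Multiset.sum_mem_convexHull_of_smul_mem {E : Type*} [AddCommGroup E] [Module ℝ E]
    {S : Set E} (h0 : (0 : E) ∈ S) (hS : ∀ c : ℝ, 0 ≤ c → ∀ x ∈ S, c • x ∈ S)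
    (t : Multiset E) (ht : ∀ x ∈ t, x ∈ S) : t.sum ∈ convexHull ℝ S := by
  have two_smul_mem : ∀ y ∈ convexHull ℝ S, (2 : ℝ) • y ∈ convexHull ℝ S := by
    intro y hy
    have hy2 : (2 : ℝ) • y ∈ convexHull ℝ ((2 : ℝ) • S) := by
      rw [convexHull_smul]; exact Set.smul_mem_smul_set hy
    exact convexHull_mono (Set.smul_set_subset_iff.mpr fun x hx => hS 2 zero_le_two x hx) hy2
  induction t using Multiset.induction_on with
  | empty => exact subset_convexHull ℝ S h0
  | cons a t ih =>
    rw [Multiset.forall_mem_cons] at ht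
    have half : a + t.sum = (1 / 2 : ℝ) • ((2 : ℝ) • a) + (1 / 2 : ℝ) • ((2 : ℝ) • t.sum) := by
      simp only [smul_smul]; norm_num
    rw [Multiset.sum_cons, half]
    exact convex_convexHull ℝ S (subset_convexHull ℝ S (hS 2 zero_le_two a ht.1))
      (two_smul_mem _ (ih ht.2)) (by norm_num) (by norm_num) (by norm_num)

theorem Matrix.vecMulVec_rotate_add_vecMulVec_rotate {ι : Type*} (c d : ℝ) (v w : ι → ℝ) :
    vecMulVec (c • v + d • w) (c • v + d • w) + vecMulVec (-d • v + c • w) (-d • v + c • w) =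
      (c ^ 2 + d ^ 2) • (vecMulVec v v + vecMulVec w w) := by
  ext i j
  simp only [add_apply, smul_apply, vecMulVec_apply, Pi.add_apply, Pi.smul_apply, smul_eq_mul]
  ring

variable {ι : Type*} (φ : Matrix ι ι ℝ →ₗ[ℝ] ℝ)

theorem exists_vecMulVec_add_eq_of_mul_nonpos_s4 [Fintype ι] {v w : ι → ℝ}
    (h : φ (vecMulVec v v) * φ (vecMulVec w w) ≤ 0) :
    ∃ u u' : ι → ℝ, φ (vecMulVec u u) = 0 ∧
      vecMulVec u u + vecMulVec u' u' = vecMulVec v v + vecMulVec w w := by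
  set f : ℝ → ℝ := fun θ => φ (vecMulVec (cos θ • v + sin θ • w) (cos θ • v + sin θ • w))
  have hf : Continuous f :=
    φ.continuous_of_finiteDimensional.comp (Continuous.matrix_vecMulVec (by fun_prop) (by fun_prop))
  have h0 : (0 : ℝ) ∈ uIcc (f 0) (f (π / 2)) := by
    simp only [f, cos_zero, sin_zero, cos_pi_div_two, sin_pi_div_two, one_smul, zero_smul,
      add_zero, zero_add, mem_uIcc]
    rcases mul_nonpos_iff.mp h with h | h <;> tauto
  obtain ⟨θ, -, hθ⟩ := intermediate_value_uIcc hf.continuousOn h0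
  refine ⟨_, -sin θ • v + cos θ • w, hθ, ?_⟩
  rw [vecMulVec_rotate_add_vecMulVec_rotate, cos_sq_add_sin_sq, one_smul]

/-- The quadratic form `x ↦ φ (x xᵀ)` has constant sign (all values `≥ 0` or all `≤ 0`) on `t`. -/
def SignCoherent (t : Multiset (ι → ℝ)) : Prop :=
  ∀ x ∈ t, ∀ y ∈ t, 0 ≤ φ (vecMulVec x x) * φ (vecMulVec y y)

variable {φ}

theorem signCoherent_cons_iff {a : ι → ℝ} {t : Multiset (ι → ℝ)} :
    SignCoherent φ (a ::ₘ t) ↔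
      (∀ b ∈ t, 0 ≤ φ (vecMulVec a a) * φ (vecMulVec b b)) ∧ SignCoherent φ t := by
  simp only [SignCoherent, Multiset.forall_mem_cons]
  refine ⟨fun h => ⟨h.1.2, fun x hx => (h.2 x hx).2⟩, fun h => ⟨⟨mul_self_nonneg _, h.1⟩,
    fun x hx => ⟨mul_comm (φ (vecMulVec a a)) _ ▸ h.1 x hx, h.2 x hx⟩⟩⟩

theorem SignCoherent.mono {s t : Multiset (ι → ℝ)} (ht : SignCoherent φ t) (hst : s ≤ t) :
    SignCoherent φ s :=
  fun x hx y hy => ht x (Multiset.subset_of_le hst hx) y (Multiset.subset_of_le hst hy)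

theorem SignCoherent.exists_cons [Fintype ι] {t : Multiset (ι → ℝ)} (ht : SignCoherent φ t)
    (a : ι → ℝ) :
    ∃ t', SignCoherent φ t' ∧ (t'.map fun x => vecMulVec x x).sum =
      vecMulVec a a + (t.map fun x => vecMulVec x x).sum := by
  induction t using Multiset.strongInductionOn generalizing a with
  | ih t ih =>
  by_cases hcoh : ∀ b ∈ t, 0 ≤ φ (vecMulVec a a) * φ (vecMulVec b b)
  · exact ⟨a ::ₘ t, signCoherent_cons_iff.mpr ⟨hcoh, ht⟩, by simp⟩
  push Not at hcoh
  obtain ⟨b, hb, hab⟩ := hcoh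
  obtain ⟨u, u', hu, huu'⟩ := exists_vecMulVec_add_eq_of_mul_nonpos_s4 φ hab.le
  obtain ⟨t₁, ht₁, hsum⟩ :=
    ih (t.erase b) (Multiset.erase_lt.mpr hb) (ht.mono (Multiset.erase_le b t)) u'
  refine ⟨u ::ₘ t₁, signCoherent_cons_iff.mpr ⟨fun x _ => by simp [hu], ht₁⟩, ?_⟩
  rw [← Multiset.cons_erase hb]
  simp only [Multiset.map_cons, Multiset.sum_cons, hsum, ← add_assoc, huu']

theorem exists_signCoherent [Fintype ι] (s : Multiset (ι → ℝ)) :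
    ∃ t, SignCoherent φ t ∧
      (t.map fun x => vecMulVec x x).sum = (s.map fun x => vecMulVec x x).sum := by
  induction s using Multiset.induction_on with
  | empty => exact ⟨0, by simp [SignCoherent], rfl⟩
  | cons a s ih =>
    obtain ⟨t, ht, hts⟩ := ih
    obtain ⟨t', ht', hsum⟩ := ht.exists_cons a
    exact ⟨t', ht', by rw [hsum, hts, Multiset.map_cons, Multiset.sum_cons]⟩

theorem SignCoherent.forall_mem_of_sum_mem {T : Set ℝ}
    (hT : ∀ a b : ℝ, 0 ≤ a * b → a + b ∈ T → a ∈ T) {t : Multiset (ι → ℝ)}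
    (ht : SignCoherent φ t) (hsum : φ (t.map fun x => vecMulVec x x).sum ∈ T) :
    ∀ x ∈ t, φ (vecMulVec x x) ∈ T := by
  classical
  intro x hx
  rw [← Multiset.cons_erase hx, Multiset.map_cons, Multiset.sum_cons, map_add] at hsum
  refine hT _ _ ?_ hsum
  rw [map_multiset_sum, Multiset.map_map, ← Multiset.sum_map_mul_left]
  exact Multiset.sum_nonneg fun r hr => by
    obtain ⟨y, hy, rfl⟩ := Multiset.mem_map.mp hr
    exact ht x hx y (Multiset.mem_of_mem_erase hy)

theorem Matrix.PosSemidef.exists_eq_multiset_sum_vecMulVec [Fintype ι] {X : Matrix ι ι ℝ}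
    (hX : X.PosSemidef) : ∃ s : Multiset (ι → ℝ), X = (s.map fun x => vecMulVec x x).sum := by
  obtain ⟨m, v, rfl⟩ := posSemidef_iff_eq_sum_vecMulVec.mp hX
  exact ⟨Finset.univ.val.map v, by
    rw [Multiset.map_map, ← Finset.sum_eq_multiset_sum]; simp⟩

variable (φ)

theorem convexHull_posSemidef_inter_vecMulVec [Fintype ι] {T : Set ℝ} (hT : Convex ℝ T)
    (hT_smul : ∀ c : ℝ, 0 ≤ c → ∀ r ∈ T, c * r ∈ T)
    (hT_split : ∀ a b : ℝ, 0 ≤ a * b → a + b ∈ T → a ∈ T) :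
    convexHull ℝ ({X | X.PosSemidef ∧ φ X ∈ T} ∩ {X | ∃ x : ι → ℝ, X = vecMulVec x x}) =
      {X | X.PosSemidef ∧ φ X ∈ T} := by
  refine (convexHull_min inter_subset_left ?_).antisymm fun X ⟨hX, hXT⟩ => ?_
  · rintro X ⟨hX, hXT⟩ Y ⟨hY, hYT⟩ a b ha hb hab
    refine ⟨(hX.smul ha).add (hY.smul hb), ?_⟩
    rw [map_add, map_smul, map_smul]
    exact hT hXT hYT ha hb hab
  obtain ⟨s, rfl⟩ := hX.exists_eq_multiset_sum_vecMulVec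
  obtain ⟨t, ht, hts⟩ := exists_signCoherent (φ := φ) s
  rw [← hts] at hXT ⊢
  refine Multiset.sum_mem_convexHull_of_smul_mem ?_ ?_ _ ?_
  · exact ⟨⟨PosSemidef.zero, by simpa using hT_smul 0 le_rfl _ hXT⟩, 0, by simp⟩
  · rintro c hc _ ⟨⟨hY, hYT⟩, y, rfl⟩
    refine ⟨⟨hY.smul hc, by simpa using hT_smul c hc _ hYT⟩, √c • y, ?_⟩
    rw [smul_vecMulVec, vecMulVec_smul, smul_smul, mul_self_sqrt hc]
  · simp only [Multiset.mem_map]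
    rintro _ ⟨x, hx, rfl⟩
    refine ⟨⟨by simpa using posSemidef_vecMulVec_self_star x, ?_⟩, x, rfl⟩
    exact ht.forall_mem_of_sum_mem hT_split hXT x hx

theorem stmt4_general {n : ℕ} (B : Matrix (Fin n) (Fin n) ℝ) :
    convexHull ℝ (Jp B ∩ Gamma n) = Jp B ∧
    convexHull ℝ (Jm B ∩ Gamma n) = Jm B ∧
    convexHull ℝ (J0 B ∩ Gamma n) = J0 B := by
  set φ := (traceLinearMap (Fin n) ℝ ℝ).comp (LinearMap.mulLeft ℝ B)
  refine ⟨convexHull_posSemidef_inter_vecMulVec φ (T := Ici 0) (convex_Ici 0)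
      (fun c hc r hr => mul_nonneg hc hr) fun a b hab h => ?_,
    convexHull_posSemidef_inter_vecMulVec φ (T := Iic 0) (convex_Iic 0)
      (fun c hc r hr => mul_nonpos_of_nonneg_of_nonpos hc hr) fun a b hab h => ?_,
    convexHull_posSemidef_inter_vecMulVec φ (T := {0}) (convex_singleton 0)
      (fun c _ r hr => by rw [mem_singleton_iff.mp hr, mul_zero]; rfl) fun a b hab h => ?_⟩
  · rw [mem_Ici] at h ⊢; nlinarith
  · rw [mem_Iic] at h ⊢; nlinarith
  · rw [mem_singleton_iff] at h ⊢; nlinarith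

theorem stmt4 {n : ℕ} (B : Matrix (Fin n) (Fin n) ℝ) (hB : B.IsSymm) :
    convexHull ℝ (Jp B ∩ Gamma n) = Jp B ∧
    convexHull ℝ (Jm B ∩ Gamma n) = Jm B ∧
    convexHull ℝ (J0 B ∩ Gamma n) = J0 B :=
  stmt4_general B
end

section
/- Let A, B ∈ S^n with A ≠ B. Then {x ∈ ℝ^n : xᵀBx = 0} ⊆ {x ∈ ℝ^n : xᵀAx ≥ 0} holds if and only if {X ∈ S^n_+ : ⟨B,X⟩ = 0} ⊆ {X ∈ S^n_+ : ⟨A,X⟩ ≥ 0}. -/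
/-!
The forward direction is the Sturm–Zhang rank-one decomposition argument. Write a PSD matrix
`X = Cᵀ C`, so that `⟨M, X⟩ = ∑ₖ cₖᵀ M cₖ` over the rows `cₖ` of `C`. Given finitely many vectors
whose `B`-values sum to zero, take one with positive and one with negative `B`-value, `x` and `y`.
Rotating the pair, `(x, y) ↦ (cos θ x + sin θ y, sin θ x - cos θ y)`, preserves the sum of the
values of every quadratic form, and by the intermediate value theorem some `θ` makes the first
vector `B`-isotropic, hence of nonnegative `A`-value. Dropping it shortens the family without
increasing the sum of `A`-values, and induction on the size of the family concludes. The converse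
direction tests the matrix condition on `X = x xᵀ`.
-/

open Matrix

namespace QuadraticMap

variable {R V : Type*} [CommRing R] [AddCommGroup V] [Module R V]

theorem map_smul_add_smul (Q : QuadraticForm R V) (a b : R) (x y : V) :
    Q (a • x + b • y) = a ^ 2 * Q x + b ^ 2 * Q y + a * b * polar Q x y := by
  rw [QuadraticMap.map_add Q, QuadraticMap.map_smul, QuadraticMap.map_smul, polar_smul_left,
    polar_smul_right]
  simp only [smul_eq_mul]
  ring

theorem map_rotate_add_map_rotate (Q : QuadraticForm R V) (c s : R) (x y : V) :
    Q (c • x + s • y) + Q (s • x - c • y) = (c ^ 2 + s ^ 2) * (Q x + Q y) := by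
  rw [sub_eq_add_neg, ← neg_smul, map_smul_add_smul, map_smul_add_smul]
  ring

end QuadraticMap

namespace Multiset

variable {ι α : Type*} [AddCommGroup α] [LinearOrder α] [IsOrderedAddMonoid α]

theorem exists_pos_of_sum_map_eq_zero {s : Multiset ι} {f : ι → α} (hs : (s.map f).sum = 0)
    {i : ι} (hi : i ∈ s) (hfi : f i ≠ 0) : ∃ j ∈ s, 0 < f j := by
  by_contra! h
  have := sum_lt_sum (g := fun _ ↦ 0) h ⟨i, hi, (h i hi).lt_of_ne hfi⟩
  simp [hs] at this

theorem exists_neg_of_sum_map_eq_zero {s : Multiset ι} {f : ι → α} (hs : (s.map f).sum = 0)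
    {i : ι} (hi : i ∈ s) (hfi : f i ≠ 0) : ∃ j ∈ s, f j < 0 := by
  simpa using exists_pos_of_sum_map_eq_zero (f := fun j ↦ -f j) (by simp [sum_map_neg, hs]) hi
    (neg_ne_zero.mpr hfi)

end Multiset

namespace QuadraticForm

open Real

variable {V : Type*} [AddCommGroup V] [Module ℝ V]

theorem exists_map_cos_smul_add_sin_smul_eq_zero (P : QuadraticForm ℝ V) {x y : V}
    (hx : 0 < P x) (hy : P y < 0) : ∃ θ : ℝ, P (cos θ • x + sin θ • y) = 0 := by
  have hcont : Continuous fun θ : ℝ ↦ P (cos θ • x + sin θ • y) := by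
    simp only [QuadraticMap.map_smul_add_smul]
    fun_prop
  obtain ⟨θ, -, hθ⟩ := intermediate_value_Icc' pi_div_two_pos.le hcont.continuousOn
    (show (0 : ℝ) ∈ Set.Icc _ _ by simp [hx.le, hy.le])
  exact ⟨θ, hθ⟩

theorem sum_map_nonneg_of_sum_map_eq_zero {P Q : QuadraticForm ℝ V}
    (hPQ : ∀ x, P x = 0 → 0 ≤ Q x) (m : Multiset V) (hm : (m.map P).sum = 0) :
    0 ≤ (m.map Q).sum := by
  rcases Multiset.empty_or_exists_mem m with rfl | ⟨z, hz⟩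
  · simp
  by_cases hPz : P z = 0
  · obtain ⟨t, rfl⟩ := Multiset.exists_cons_of_mem hz
    have ht : (t.map P).sum = 0 := by simpa [hPz] using hm
    simpa using add_nonneg (hPQ z hPz) (sum_map_nonneg_of_sum_map_eq_zero hPQ t ht)
  obtain ⟨x, hx, hPx⟩ := Multiset.exists_pos_of_sum_map_eq_zero hm hz hPz
  obtain ⟨y, hy, hPy⟩ := Multiset.exists_neg_of_sum_map_eq_zero hm hz hPz
  obtain ⟨r, rfl⟩ : ∃ r, m = x ::ₘ y ::ₘ r := by
    obtain ⟨t, rfl⟩ := Multiset.exists_cons_of_mem hx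
    have hyt : y ∈ t := (Multiset.mem_cons.mp hy).resolve_left fun h ↦ by
      rw [h] at hPy; linarith
    obtain ⟨r, rfl⟩ := Multiset.exists_cons_of_mem hyt
    exact ⟨r, rfl⟩
  obtain ⟨θ, hθ⟩ := exists_map_cos_smul_add_sin_smul_eq_zero P hPx hPy
  set w := cos θ • x + sin θ • y
  set u := sin θ • x - cos θ • y
  have hrot (R : QuadraticForm ℝ V) : R w + R u = R x + R y := by
    simp [w, u, QuadraticMap.map_rotate_add_map_rotate, cos_sq_add_sin_sq]
  have hu : ((u ::ₘ r).map P).sum = 0 := by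
    simp only [Multiset.map_cons, Multiset.sum_cons] at hm ⊢
    linarith [hrot P]
  have := sum_map_nonneg_of_sum_map_eq_zero hPQ (u ::ₘ r) hu
  simp only [Multiset.map_cons, Multiset.sum_cons] at this ⊢
  linarith [hrot Q, hPQ w hθ]
termination_by Multiset.card m

theorem sum_nonneg_of_sum_eq_zero {ι : Type*} {P Q : QuadraticForm ℝ V}
    (hPQ : ∀ x, P x = 0 → 0 ≤ Q x) (s : Finset ι) (v : ι → V) (hs : ∑ i ∈ s, P (v i) = 0) :
    0 ≤ ∑ i ∈ s, Q (v i) := by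
  simp only [Finset.sum_eq_multiset_sum] at hs ⊢
  simpa [Multiset.map_map] using
    sum_map_nonneg_of_sum_map_eq_zero hPQ (s.val.map v) (by simpa [Multiset.map_map] using hs)

end QuadraticForm

namespace Matrix

variable {m n : Type*} [Fintype m] [Fintype n] [DecidableEq n]

theorem toQuadraticForm'_apply (M : Matrix n n ℝ) (x : n → ℝ) :
    M.toQuadraticForm' x = x ⬝ᵥ M *ᵥ x :=
  toLinearMap₂'_apply' M x x

theorem trace_mul_vecMulVec_self (M : Matrix n n ℝ) (x : n → ℝ) :
    (M * vecMulVec x x).trace = M.toQuadraticForm' x := by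
  rw [mul_vecMulVec, trace_vecMulVec, dotProduct_comm, toQuadraticForm'_apply]

theorem trace_mul_transpose_mul_self (M : Matrix n n ℝ) (C : Matrix m n ℝ) :
    (M * (Cᵀ * C)).trace = ∑ k, M.toQuadraticForm' (C k) := by
  rw [← Matrix.mul_assoc, trace_mul_cycle]
  refine Finset.sum_congr rfl fun k _ ↦ ?_
  rw [toQuadraticForm'_apply, dotProduct_mulVec]
  rfl

open scoped MatrixOrder in
theorem PosSemidef.exists_eq_transpose_mul_self {X : Matrix n n ℝ} (hX : X.PosSemidef) :
    ∃ C : Matrix n n ℝ, X = Cᵀ * C := by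
  obtain ⟨C, rfl⟩ := CStarAlgebra.nonneg_iff_eq_star_mul_self.mp hX.nonneg
  exact ⟨C, by rw [star_eq_conjTranspose, conjTranspose_eq_transpose_of_trivial]⟩

end Matrix

theorem stmt6_general {n : ℕ} (A B : Matrix (Fin n) (Fin n) ℝ) :
    ({x : Fin n → ℝ | x ⬝ᵥ B.mulVec x = 0} ⊆ {x : Fin n → ℝ | 0 ≤ x ⬝ᵥ A.mulVec x})
      ↔ ({X : Matrix (Fin n) (Fin n) ℝ | X.PosSemidef ∧ (B * X).trace = 0}
          ⊆ {X : Matrix (Fin n) (Fin n) ℝ | X.PosSemidef ∧ 0 ≤ (A * X).trace}) := by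
  simp only [Set.subset_def, Set.mem_ofPred_eq, ← toQuadraticForm'_apply]
  constructor
  · rintro hV X ⟨hX, hBX⟩
    refine ⟨hX, ?_⟩
    obtain ⟨C, rfl⟩ := hX.exists_eq_transpose_mul_self
    rw [trace_mul_transpose_mul_self] at hBX ⊢
    exact QuadraticForm.sum_nonneg_of_sum_eq_zero hV Finset.univ C hBX
  · intro hM x hx
    have hxx : (vecMulVec x x).PosSemidef := by simpa using posSemidef_vecMulVec_self_star x
    simpa [trace_mul_vecMulVec_self] using (hM _ ⟨hxx, by rwa [trace_mul_vecMulVec_self]⟩).2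

theorem stmt6 {n : ℕ} (A B : Matrix (Fin n) (Fin n) ℝ)
    (hA : A.IsSymm) (hB : B.IsSymm) (hAB : A ≠ B) :
    ({x : Fin n → ℝ | x ⬝ᵥ B.mulVec x = 0} ⊆ {x : Fin n → ℝ | 0 ≤ x ⬝ᵥ A.mulVec x})
      ↔ ({X : Matrix (Fin n) (Fin n) ℝ | X.PosSemidef ∧ (B * X).trace = 0}
          ⊆ {X : Matrix (Fin n) (Fin n) ℝ | X.PosSemidef ∧ 0 ≤ (A * X).trace}) :=
  stmt6_general A B
end

section
/- Let B ∈ S^n be written in block form B = [[C, c],[cᵀ, γ]] with C ∈ S^{n-1}, c ∈ ℝ^{n-1}, γ ∈ ℝ. Assume that C is nonsingular and that there exists ũ ∈ ℝ^{n-1} with (ũ,1)ᵀ B (ũ,1) ≤ 0. Then the set-valued map z ↦ ff_-(z, B) = {u ∈ ℝ^{n-1} : (u,z)ᵀ B (u,z) ≤ 0} from [0,1] to subsets of ℝ^{n-1} is lower semicontinuous at z = 0, i.e., for every open set W ⊆ ℝ^{n-1} with W ∩ ff_-(0,B) ≠ ∅, there exists ε ∈ (0,1] such that W ∩ ff_-(z,B)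 ≠ ∅ for all z ∈ [0,ε). -/
open Matrix

/-- q(u,z,B) = (u,z)ᵀ B (u,z), where (u,z) is the vector obtained by appending z to u. -/
def qform {m : ℕ} (u : Fin m → ℝ) (z : ℝ) (B : Matrix (Fin (m + 1)) (Fin (m + 1)) ℝ) : ℝ :=
  (Fin.snoc u z : Fin (m + 1) → ℝ) ⬝ᵥ B.mulVec (Fin.snoc u z)

/-- ff_-(z,B) = {u ∈ ℝ^{n-1} : q(u,z,B) ≤ 0}. -/
def ffm {m : ℕ} (z : ℝ) (B : Matrix (Fin (m + 1)) (Fin (m + 1)) ℝ) : Set (Fin m → ℝ) :=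
  {u | qform u z B ≤ 0}


/-! If some `u ∈ W` has `q(u,0,B) < 0`, continuity of `z ↦ q(u,z,B)` keeps `u` in `ff_-(z,B)`
for small `z`. If the given point of `W ∩ ff_-(0,B)` is `0`, the ray `z • ũ` works, since
`q(z ũ, z, B) = z² q(ũ, 1, B) ≤ 0`. Otherwise it is a nonzero isotropic vector `u` of the
nonsingular form `C`, and `u - t • C u` has `q(·,0,B) = -2t |C u|² + O(t²) < 0` for small `t > 0`,
which reduces to the first case. -/

open Filter Topology

lemma continuous_qform {m : ℕ} (u : Fin m → ℝ) (B : Matrix (Fin (m + 1)) (Fin (m + 1)) ℝ) :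
    Continuous fun z : ℝ => qform u z B := by
  unfold qform
  fun_prop

lemma qform_smul_self {m : ℕ} (u : Fin m → ℝ) (z : ℝ) (B : Matrix (Fin (m + 1)) (Fin (m + 1)) ℝ) :
    qform (z • u) z B = z ^ 2 * qform u 1 B := by
  have : (Fin.snoc (z • u) z : Fin (m + 1) → ℝ) = z • Fin.snoc u 1 := by
    ext i
    induction i using Fin.lastCases <;> simp
  simp only [qform, this, mulVec_smul, dotProduct_smul, smul_dotProduct, smul_eq_mul]
  ring

lemma qform_zero {m : ℕ} (u : Fin m → ℝ) (B : Matrix (Fin (m + 1)) (Fin (m + 1)) ℝ) :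
    qform u 0 B = u ⬝ᵥ B.submatrix Fin.castSucc Fin.castSucc *ᵥ u := by
  simp [qform, dotProduct, mulVec, Fin.sum_univ_castSucc]

namespace Matrix.IsSymm

variable {ι : Type*} [Fintype ι] {C : Matrix ι ι ℝ}

lemma dotProduct_mulVec_sub_smul_mulVec (hC : C.IsSymm) (u : ι → ℝ) (t : ℝ) :
    (u - t • C *ᵥ u) ⬝ᵥ C *ᵥ (u - t • C *ᵥ u) =
      u ⬝ᵥ C *ᵥ u - 2 * t * (C *ᵥ u ⬝ᵥ C *ᵥ u) + t ^ 2 * (C *ᵥ u ⬝ᵥ C *ᵥ (C *ᵥ u)) := by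
  have hswap : u ⬝ᵥ C *ᵥ (C *ᵥ u) = C *ᵥ u ⬝ᵥ C *ᵥ u := by
    rw [dotProduct_mulVec, ← mulVec_transpose, hC.eq]
  simp only [mulVec_sub, mulVec_smul, sub_dotProduct, dotProduct_sub, smul_dotProduct,
    dotProduct_smul, smul_eq_mul, hswap, dotProduct_comm u (C *ᵥ u)]
  ring

lemma exists_mem_dotProduct_mulVec_neg [DecidableEq ι] (hC : C.IsSymm) (hCu : IsUnit C)
    {W : Set (ι → ℝ)} (hW : IsOpen W) {u : ι → ℝ} (huW : u ∈ W) (hu : u ≠ 0)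
    (h0 : u ⬝ᵥ C *ᵥ u = 0) : ∃ w ∈ W, w ⬝ᵥ C *ᵥ w < 0 := by
  set v := C *ᵥ u
  have hv : 0 < v ⬝ᵥ v := by
    have hv0 : v ≠ 0 := by
      simpa using (mulVec_injective_iff_isUnit.mpr hCu).ne hu
    simpa using dotProduct_self_star_pos_iff.mpr hv0
  have hcurve : ∀ᶠ t in 𝓝[>] (0 : ℝ), u - t • v ∈ W := by
    have : Tendsto (fun t : ℝ => u - t • v) (𝓝 0) (𝓝 u) :=
      (show Continuous fun t : ℝ => u - t • v by fun_prop).tendsto' 0 u (by simp)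
    exact (this.mono_left nhdsWithin_le_nhds).eventually (hW.mem_nhds huW)
  have hneg : ∀ᶠ t in 𝓝[>] (0 : ℝ), t * (v ⬝ᵥ C *ᵥ v) - 2 * (v ⬝ᵥ v) < 0 := by
    have : Tendsto (fun t : ℝ => t * (v ⬝ᵥ C *ᵥ v) - 2 * (v ⬝ᵥ v)) (𝓝 0) (𝓝 (-2 * (v ⬝ᵥ v))) :=
      (show Continuous fun t : ℝ => t * (v ⬝ᵥ C *ᵥ v) - 2 * (v ⬝ᵥ v) by fun_prop).tendsto'
        0 _ (by ring)
    exact (this.mono_left nhdsWithin_le_nhds).eventually_lt_const (by linarith)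
  obtain ⟨t, htW, ht, htpos⟩ := (hcurve.and (hneg.and self_mem_nhdsWithin)).exists
  refine ⟨u - t • v, htW, ?_⟩
  rw [hC.dotProduct_mulVec_sub_smul_mulVec, h0]
  nlinarith [mul_neg_of_pos_of_neg (show (0 : ℝ) < t from htpos) ht]

end Matrix.IsSymm

lemma exists_pos_le_one_of_eventually_nhdsGE {p : ℝ → Prop} (h : ∀ᶠ z in 𝓝[≥] 0, p z) :
    ∃ ε : ℝ, 0 < ε ∧ ε ≤ 1 ∧ ∀ z : ℝ, 0 ≤ z → z < ε → p z := by
  obtain ⟨ε, hε, hsub⟩ := (mem_nhdsGE_iff_exists_mem_Ioc_Ico_subset one_pos).mp h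
  exact ⟨ε, hε.1, hε.2, fun z hz0 hzε => hsub ⟨hz0, hzε⟩⟩

lemma eventually_mem_ffm_of_qform_neg {m : ℕ} {u : Fin m → ℝ}
    {B : Matrix (Fin (m + 1)) (Fin (m + 1)) ℝ} (h : qform u 0 B < 0) :
    ∀ᶠ z in 𝓝 0, u ∈ ffm z B :=
  (((continuous_qform u B).tendsto 0).eventually (gt_mem_nhds h)).mono fun _ hz => hz.le

theorem stmt14 {m : ℕ} (B : Matrix (Fin (m + 1)) (Fin (m + 1)) ℝ) (hB : B.IsSymm)
    (hC : IsUnit (B.submatrix (Fin.castSucc) (Fin.castSucc)).det)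
    (hex : ∃ u : Fin m → ℝ, qform u 1 B ≤ 0) :
    ∀ W : Set (Fin m → ℝ), IsOpen W → (W ∩ ffm 0 B).Nonempty →
      ∃ ε : ℝ, 0 < ε ∧ ε ≤ 1 ∧ ∀ z : ℝ, 0 ≤ z → z < ε → (W ∩ ffm z B).Nonempty := by
  rintro W hW ⟨u₀, hu₀W, hu₀⟩
  refine exists_pos_le_one_of_eventually_nhdsGE (Eventually.filter_mono nhdsWithin_le_nhds ?_)
  rcases eq_or_ne u₀ 0 with rfl | hu₀0
  · obtain ⟨ũ, hũ⟩ := hex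
    have hray : Tendsto (fun z : ℝ => z • ũ) (𝓝 0) (𝓝 0) :=
      (show Continuous fun z : ℝ => z • ũ by fun_prop).tendsto' 0 0 (zero_smul ℝ ũ)
    filter_upwards [hray.eventually (hW.mem_nhds hu₀W)] with z hz
    refine ⟨z • ũ, hz, ?_⟩
    show qform (z • ũ) z B ≤ 0
    rw [qform_smul_self]
    exact mul_nonpos_of_nonneg_of_nonpos (sq_nonneg z) hũ
  · obtain ⟨w, hwW, hw⟩ : ∃ w ∈ W, qform w 0 B < 0 := by
      rcases (show qform u₀ 0 B ≤ 0 from hu₀).lt_or_eq with h | h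
      · exact ⟨u₀, hu₀W, h⟩
      · simp only [qform_zero] at h ⊢
        exact (hB.submatrix _).exists_mem_dotProduct_mulVec_neg
          ((isUnit_iff_isUnit_det _).mpr hC) hW hu₀W hu₀0 h
    filter_upwards [eventually_mem_ffm_of_qform_neg hw] with z hz using ⟨w, hwW, hz⟩
end

section
/- Let n ≥ 3, 1 ≤ ℓ ≤ n−2, λ = (λ₁,…,λ_n) with all λ_i > 0, and for σ ∈ ℝ define q_σ(u) = −Σ_{i=1}^ℓ λ_i u_i² + Σ_{j=ℓ+1}^{n−1} Σ_{i=1}^ℓ λ_j (u_j − σ u_i)² + λ_n on ℝ^{n−1}. Then for every σ there exists T > σ such that for all τ ≥ T, the sets {u : q_σ(u) ≤ 0} and {u : q_τ(u) ≤ 0} are disjoint. -/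
open Finset

/-- The quadratic q_σ(u) = −Σ_{i} λ_i u_i² + Σ_j Σ_i λ'_j (u_j − σ u_i)² + λ_n,
with the first block of coordinates indexed by `Fin l` (i = 1,…,ℓ) and the second
block by `Fin m` (j = ℓ+1,…,n−1), so that the dimension is n − 1 = l + m. -/
def qpar {l m : ℕ} (lam1 : Fin l → ℝ) (lam2 : Fin m → ℝ) (lamn : ℝ) (σ : ℝ)
    (u : Fin l ⊕ Fin m → ℝ) : ℝ :=
  -(∑ i, lam1 i * (u (Sum.inl i)) ^ 2)
    + ∑ j, ∑ i, lam2 j * (u (Sum.inr j) - σ * u (Sum.inl i)) ^ 2 + lamn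

theorem stmt18 {l m : ℕ} (hl : 1 ≤ l) (hm : 1 ≤ m)
    (lam1 : Fin l → ℝ) (lam2 : Fin m → ℝ) (lamn : ℝ)
    (h1 : ∀ i, 0 < lam1 i) (h2 : ∀ j, 0 < lam2 j) (hn : 0 < lamn) :
    ∀ σ : ℝ, ∃ T : ℝ, σ < T ∧ ∀ τ : ℝ, T ≤ τ →
      ∀ u : Fin l ⊕ Fin m → ℝ,
        ¬(qpar lam1 lam2 lamn σ u ≤ 0 ∧ qpar lam1 lam2 lamn τ u ≤ 0) := by
  intro σ
  have hne : (Finset.univ : Finset (Fin l)).Nonempty := ⟨⟨0, hl⟩, Finset.mem_univ _⟩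
  set j0 : Fin m := ⟨0, hm⟩ with hj0
  set M : ℝ := Finset.univ.sup' hne lam1 with hMdef
  have hMpos : 0 < M := lt_of_lt_of_le (h1 ⟨0, hl⟩) (Finset.le_sup' lam1 (Finset.mem_univ _))
  have hle : ∀ i, lam1 i ≤ M := fun i => Finset.le_sup' lam1 (Finset.mem_univ i)
  set x : ℝ := Real.sqrt (M / lam2 j0) with hxdef
  have hx : (0:ℝ) ≤ x := Real.sqrt_nonneg _
  have hxx : lam2 j0 * x ^ 2 = M := by
    rw [hxdef, Real.sq_sqrt (div_nonneg hMpos.le (h2 j0).le),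
      mul_div_cancel₀ _ (h2 j0).ne']
  refine ⟨σ + 1 + 2 * x, by linarith, ?_⟩
  intro τ hτ u ⟨hA, hB⟩
  set S : ℝ := ∑ i, lam1 i * (u (Sum.inl i))^2 with hSdef
  have key : ∀ ρ : ℝ, qpar lam1 lam2 lamn ρ u ≤ 0 →
      (∑ i, lam2 j0 * (u (Sum.inr j0) - ρ * u (Sum.inl i))^2) ≤ S - lamn := by
    intro ρ hρ
    have h0 : (∑ i, lam2 j0 * (u (Sum.inr j0) - ρ * u (Sum.inl i))^2)
        ≤ ∑ j, ∑ i, lam2 j * (u (Sum.inr j) - ρ * u (Sum.inl i))^2 := by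
      refine Finset.single_le_sum
        (f := fun j => ∑ i, lam2 j * (u (Sum.inr j) - ρ * u (Sum.inl i))^2)
        (fun j _ => Finset.sum_nonneg fun i _ => mul_nonneg (h2 j).le (sq_nonneg _)) (Finset.mem_univ j0)
    have h1' := hρ
    simp only [qpar] at h1'
    linarith
  have hAσ := key σ hA
  have hAτ := key τ hB
  have hSpos : 0 < S := by
    have h0 : 0 ≤ ∑ i, lam2 j0 * (u (Sum.inr j0) - σ * u (Sum.inl i))^2 :=
      Finset.sum_nonneg fun i _ => mul_nonneg (h2 j0).le (sq_nonneg _)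
    linarith
  set Q : ℝ := ∑ i, lam2 j0 * (u (Sum.inl i))^2 with hQdef
  have hsum : (τ - σ)^2 * Q ≤ 4 * (S - lamn) := by
    have hpt : ∀ i : Fin l, (τ - σ)^2 * (lam2 j0 * (u (Sum.inl i))^2)
        ≤ 2 * (lam2 j0 * (u (Sum.inr j0) - σ * u (Sum.inl i))^2)
          + 2 * (lam2 j0 * (u (Sum.inr j0) - τ * u (Sum.inl i))^2) := by
      intro i
      have h2j := (h2 j0).le
      nlinarith [sq_nonneg (2 * u (Sum.inr j0) - (σ + τ) * u (Sum.inl i)),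
        mul_nonneg h2j (sq_nonneg (2 * u (Sum.inr j0) - (σ + τ) * u (Sum.inl i)))]
    calc (τ - σ)^2 * Q
        = ∑ i, (τ - σ)^2 * (lam2 j0 * (u (Sum.inl i))^2) := by
          rw [hQdef, Finset.mul_sum]
      _ ≤ ∑ i, (2 * (lam2 j0 * (u (Sum.inr j0) - σ * u (Sum.inl i))^2)
            + 2 * (lam2 j0 * (u (Sum.inr j0) - τ * u (Sum.inl i))^2)) :=
          Finset.sum_le_sum fun i _ => hpt i
      _ = 2 * (∑ i, lam2 j0 * (u (Sum.inr j0) - σ * u (Sum.inl i))^2)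
            + 2 * (∑ i, lam2 j0 * (u (Sum.inr j0) - τ * u (Sum.inl i))^2) := by
          rw [Finset.sum_add_distrib, Finset.mul_sum, Finset.mul_sum]
      _ ≤ 4 * (S - lamn) := by linarith
  have hlower : lam2 j0 * S ≤ M * Q := by
    rw [hSdef, hQdef, Finset.mul_sum, Finset.mul_sum]
    refine Finset.sum_le_sum fun i _ => ?_
    have hi := hle i
    have h2j := (h2 j0).le
    nlinarith [mul_nonneg (mul_nonneg h2j (sq_nonneg (u (Sum.inl i)))) (sub_nonneg.2 hi)]
  -- combine everything
  have hD : 1 + 2 * x ≤ τ - σ := by linarith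
  have hDpos : 0 < τ - σ := by linarith
  have hQnn : 0 ≤ Q := Finset.sum_nonneg fun i _ => mul_nonneg (h2 j0).le (sq_nonneg _)
  have h2j := h2 j0
  -- lam2 j0 * S * (τ-σ)^2 ≤ M * Q * (τ-σ)^2 ≤ M * 4 * (S - lamn) < 4 M S
  have step1 : lam2 j0 * S * (τ - σ)^2 ≤ M * Q * (τ - σ)^2 :=
    mul_le_mul_of_nonneg_right hlower (sq_nonneg _)
  have step2 : M * ((τ - σ)^2 * Q) ≤ M * (4 * (S - lamn)) :=
    mul_le_mul_of_nonneg_left hsum hMpos.le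
  -- lower bound: lam2 j0 * S * (τ-σ)^2 ≥ lam2 j0 * S * (1+2x)^2 ≥ 16 M S
  have step3 : lam2 j0 * S * (1 + 2*x)^2 ≤ lam2 j0 * S * (τ - σ)^2 := by
    have h1x : 0 ≤ 1 + 2*x := by linarith
    have := mul_le_mul_of_nonneg_left (mul_le_mul hD hD h1x hDpos.le)
      (mul_nonneg h2j.le hSpos.le)
    calc lam2 j0 * S * (1 + 2*x)^2 = lam2 j0 * S * ((1+2*x) * (1+2*x)) := by ring
      _ ≤ lam2 j0 * S * ((τ-σ) * (τ-σ)) := this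
      _ = lam2 j0 * S * (τ - σ)^2 := by ring
  nlinarith [mul_pos hMpos hSpos, mul_pos hMpos hn, mul_pos h2j hSpos,
    mul_nonneg (mul_nonneg h2j.le hSpos.le) hx,
    mul_nonneg hx (mul_pos h2j hSpos).le]
end

section
/- Let b, c ∈ ℝ^{m} be linearly independent vectors, 0 ≤ a₀ < a₁ < … a strictly increasing sequence, and r > 0. For k ≥ 1, define g_k(v) = (bᵀv − a_{k−1} cᵀv)(bᵀv − a_k cᵀv) + r² on ℝ^m. Then: (i) for each k there exists v with g_k(v) < 0; and (ii) for distinct k ≠ ℓ, {v : g_k(v) ≤ 0} ∩ {v : g_ℓ(v) < 0} = ∅. -/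
open Matrix

/-- g_k(v) = (bᵀv − a_{k−1} cᵀv)(bᵀv − a_k cᵀv) + r². -/
def gfun {m : ℕ} (b c : Fin m → ℝ) (a : ℕ → ℝ) (r : ℝ) (k : ℕ) (v : Fin m → ℝ) : ℝ :=
  (b ⬝ᵥ v - a (k - 1) * (c ⬝ᵥ v)) * (b ⬝ᵥ v - a k * (c ⬝ᵥ v)) + r ^ 2

lemma exists_dot' {m : ℕ} (b c : Fin m → ℝ)
    (hbc : LinearIndependent ℝ ![b, c]) (s t : ℝ) :
    ∃ v : Fin m → ℝ, b ⬝ᵥ v = s ∧ c ⬝ᵥ v = t := by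
  have h := LinearIndependent.pair_iff.mp hbc
  set B := b ⬝ᵥ b with hB
  set C := b ⬝ᵥ c with hC
  set D := c ⬝ᵥ c with hD
  have hcb : c ⬝ᵥ b = C := by rw [hC, dotProduct_comm]
  have hd : B * D - C ^ 2 ≠ 0 := by
    intro hd0
    have hw : (D • b - C • c) ⬝ᵥ (D • b - C • c) = 0 := by
      simp only [sub_dotProduct, dotProduct_sub, smul_dotProduct, dotProduct_smul,
        smul_eq_mul, ← hB, ← hC, ← hD, hcb]
      linear_combination D * hd0
    have hw0 : D • b - C • c = 0 := (dotProduct_self_eq_zero (v := D • b - C • c)).mp hw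
    have h2 := h D (-C) (by rw [neg_smul, ← sub_eq_add_neg]; exact hw0)
    have hD0 : D = 0 := h2.1
    have hc0 : c = 0 := (dotProduct_self_eq_zero (v := c)).mp (by rw [← hD, hD0])
    have := h 0 1 (by simp [hc0])
    exact one_ne_zero this.2
  set d := B * D - C ^ 2 with hdd
  refine ⟨((s * D - t * C) / d) • b + ((t * B - s * C) / d) • c, ?_, ?_⟩
  · simp only [dotProduct_add, dotProduct_smul, smul_eq_mul, ← hB, ← hC]
    field_simp
    ring
  · simp only [dotProduct_add, dotProduct_smul, smul_eq_mul, hcb, ← hD]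
    field_simp
    ring

lemma key_disj (a1 a2 a3 a4 s t r : ℝ) (hr : 0 < r) (h12 : a1 < a2) (h23 : a2 ≤ a3)
    (h34 : a3 < a4) (hf1 : (s - a1*t)*(s - a2*t) ≤ -r^2)
    (hf2 : (s - a3*t)*(s - a4*t) ≤ -r^2) : False := by
  have hr2 : 0 < r^2 := by positivity
  rcases lt_trichotomy t 0 with htn | rfl | htp
  · have o1 : s - a1*t < s - a2*t := by nlinarith
    have o2 : s - a2*t ≤ s - a3*t := by nlinarith
    have o3 : s - a3*t < s - a4*t := by nlinarith
    have p2 : 0 < s - a2*t := by nlinarith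
    have p3 : s - a3*t < 0 := by nlinarith
    linarith
  · nlinarith [sq_nonneg s]
  · have o1 : s - a2*t < s - a1*t := by nlinarith
    have o2 : s - a3*t ≤ s - a2*t := by nlinarith
    have o3 : s - a4*t < s - a3*t := by nlinarith
    have p2 : s - a2*t < 0 := by nlinarith
    have p3 : 0 < s - a3*t := by nlinarith
    linarith

theorem stmt19 {m : ℕ} (b c : Fin m → ℝ)
    (hbc : LinearIndependent ℝ ![b, c])
    (a : ℕ → ℝ) (ha0 : 0 ≤ a 0) (hmono : StrictMono a)
    (r : ℝ) (hr : 0 < r) :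
    (∀ k ≥ 1, ∃ v : Fin m → ℝ, gfun b c a r k v < 0) ∧
    (∀ k ≥ 1, ∀ l ≥ 1, k ≠ l → ∀ v : Fin m → ℝ,
      ¬(gfun b c a r k v ≤ 0 ∧ gfun b c a r l v < 0)) := by
  constructor
  · intro k hk
    have hak : a (k - 1) < a k := hmono (Nat.sub_lt (by omega) one_pos)
    have hpos : 0 < a k - a (k - 1) := by linarith
    set t := 3 * r / (a k - a (k - 1)) with ht
    set s := 2 * r + a (k - 1) * t with hs
    obtain ⟨v, hbv, hcv⟩ := exists_dot' b c hbc s t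
    refine ⟨v, ?_⟩
    have h1 : b ⬝ᵥ v - a (k - 1) * (c ⬝ᵥ v) = 2 * r := by rw [hbv, hcv]; ring
    have h2 : b ⬝ᵥ v - a k * (c ⬝ᵥ v) = -r := by
      rw [hbv, hcv, hs, ht]; field_simp; ring
    rw [gfun, h1, h2]; nlinarith
  · intro k hk l hl hkl v ⟨hgk, hgl⟩
    have hfk : (b ⬝ᵥ v - a (k-1) * (c ⬝ᵥ v)) * (b ⬝ᵥ v - a k * (c ⬝ᵥ v)) ≤ -r^2 := by
      have h : gfun b c a r k v = _ + r^2 := rfl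
      rw [gfun] at hgk; linarith
    have hfl : (b ⬝ᵥ v - a (l-1) * (c ⬝ᵥ v)) * (b ⬝ᵥ v - a l * (c ⬝ᵥ v)) ≤ -r^2 := by
      rw [gfun] at hgl; linarith
    have hak : a (k-1) < a k := hmono (Nat.sub_lt (by omega) one_pos)
    have hal : a (l-1) < a l := hmono (Nat.sub_lt (by omega) one_pos)
    rcases lt_or_gt_of_ne hkl with h | h
    · exact key_disj (a (k-1)) (a k) (a (l-1)) (a l) (b ⬝ᵥ v) (c ⬝ᵥ v) r hr
        hak (hmono.monotone (by omega)) hal hfk hfl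
    · exact key_disj (a (l-1)) (a l) (a (k-1)) (a k) (b ⬝ᵥ v) (c ⬝ᵥ v) r hr
        hal (hmono.monotone (by omega)) hak hfl hfk
end
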